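/- Let E and F be Banach spaces over 𝕜 (= ℝ or ℂ) and let m, n, k ≥ 1. The correspondence Δ_k^n : 𝒫(^mE;F) → 𝒫(^n 𝒫(^kF); 𝒫(^{mnk}E)), P ↦ Δ_k^n P, is a continuous kn-homogeneous polynomial (it is generated by the continuous kn-linear map A(P₁,…,P_{kn})(q)(x) = q̌(P₁(x),…,P_k(x)) ⋯ q̌(P_{(n-1)k+1}(x),…,P_{kn}(x))), and if E ≠ {0} and F ≠ {0} then ‖Δ_k^n‖ = 1. -/

import Mathlib

open scoped NNReal ENNReal

/-- `P : E → F` is a continuous `m`-homogeneous polynomial: it is generated by a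
continuous `m`-linear map. -/
def IsHomPoly (𝕜 : Type*) [RCLike 𝕜] (m : ℕ) {E F : Type*}
    [NormedAddCommGroup E] [NormedSpace 𝕜 E] [NormedAddCommGroup F] [NormedSpace 𝕜 F]
    (P : E → F) : Prop :=
  ∃ A : ContinuousMultilinearMap 𝕜 (fun _ : Fin m => E) F, ∀ x, P x = A (fun _ => x)

/-- The sup norm over the closed unit ball. -/
noncomputable def polyNorm {E F : Type*} [Norm E] [Norm F] (P : E → F) : ℝ :=
  sSup ((fun x => ‖P x‖) '' {x : E | ‖x‖ ≤ 1})

/-- The space `𝒫(^m E; F)` of continuous `m`-homogeneous polynomials. -/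
structure HPoly (𝕜 : Type*) [RCLike 𝕜] (m : ℕ) (E F : Type*)
    [NormedAddCommGroup E] [NormedSpace 𝕜 E] [NormedAddCommGroup F] [NormedSpace 𝕜 F] where
  toFun : E → F
  isPoly' : IsHomPoly 𝕜 m toFun

namespace HPoly

variable {𝕜 : Type*} [RCLike 𝕜] {m : ℕ} {E F : Type*}
  [NormedAddCommGroup E] [NormedSpace 𝕜 E] [NormedAddCommGroup F] [NormedSpace 𝕜 F]

instance : FunLike (HPoly 𝕜 m E F) E F where
  coe P := P.toFun
  coe_injective := by rintro ⟨f, hf⟩ ⟨g, hg⟩ h; simpa using h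

@[ext] theorem ext {P Q : HPoly 𝕜 m E F} (h : ∀ x, P x = Q x) : P = Q := DFunLike.ext _ _ h

theorem isPoly (P : HPoly 𝕜 m E F) : IsHomPoly 𝕜 m ⇑P := P.isPoly'

instance : Zero (HPoly 𝕜 m E F) := ⟨⟨fun _ => 0, ⟨0, by simp⟩⟩⟩

@[simp] theorem zero_apply (x : E) : (0 : HPoly 𝕜 m E F) x = 0 := rfl

instance : Add (HPoly 𝕜 m E F) :=
  ⟨fun P Q => ⟨fun x => P x + Q x, by
    obtain ⟨A, hA⟩ := P.isPoly'
    obtain ⟨B, hB⟩ := Q.isPoly'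
    refine ⟨A + B, fun x => ?_⟩
    show P.toFun x + Q.toFun x = (A + B) fun _ => x
    rw [ContinuousMultilinearMap.add_apply, hA x, hB x]⟩⟩

@[simp] theorem add_apply (P Q : HPoly 𝕜 m E F) (x : E) : (P + Q) x = P x + Q x := rfl

instance : Neg (HPoly 𝕜 m E F) :=
  ⟨fun P => ⟨fun x => -P x, by
    obtain ⟨A, hA⟩ := P.isPoly'
    refine ⟨-A, fun x => ?_⟩
    show -P.toFun x = (-A) fun _ => x
    rw [ContinuousMultilinearMap.neg_apply, hA x]⟩⟩

@[simp] theorem neg_apply (P : HPoly 𝕜 m E F) (x : E) : (-P) x = -P x := rfl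

instance : SMul 𝕜 (HPoly 𝕜 m E F) :=
  ⟨fun c P => ⟨fun x => c • P x, by
    obtain ⟨A, hA⟩ := P.isPoly'
    refine ⟨c • A, fun x => ?_⟩
    show c • P.toFun x = (c • A) fun _ => x
    rw [ContinuousMultilinearMap.smul_apply, hA x]⟩⟩

@[simp] theorem smul_apply (c : 𝕜) (P : HPoly 𝕜 m E F) (x : E) : (c • P) x = c • P x := rfl

instance : AddCommGroup (HPoly 𝕜 m E F) where
  add_assoc P Q R := by ext x; simp [add_assoc]
  zero_add P := by ext x; simp
  add_zero P := by ext x; simp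
  add_comm P Q := by ext x; simp [add_comm]
  neg_add_cancel P := by ext x; simp
  nsmul := nsmulRec
  zsmul := zsmulRec

instance : Module 𝕜 (HPoly 𝕜 m E F) where
  one_smul P := by ext x; simp
  mul_smul a b P := by ext x; simp [mul_smul]
  smul_zero a := by ext x; simp
  smul_add a P Q := by ext x; simp
  add_smul a b P := by ext x; simp [add_smul]
  zero_smul P := by ext x; simp

theorem bddAbove_image (P : HPoly 𝕜 m E F) :
    BddAbove ((fun x => ‖P x‖) '' {x : E | ‖x‖ ≤ 1}) := by
  obtain ⟨A, hA⟩ := P.isPoly'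
  refine ⟨‖A‖, ?_⟩
  rintro r ⟨x, hx, rfl⟩
  show ‖P.toFun x‖ ≤ ‖A‖
  rw [hA x]
  calc ‖A fun _ => x‖ ≤ ‖A‖ * ∏ _i : Fin m, ‖x‖ := A.le_opNorm _
    _ ≤ ‖A‖ * 1 := by
        refine mul_le_mul_of_nonneg_left ?_ (norm_nonneg A)
        rw [Finset.prod_const]
        exact pow_le_one₀ (norm_nonneg x) hx
    _ = ‖A‖ := mul_one _

theorem polyNorm_coe_nonneg (P : HPoly 𝕜 m E F) : 0 ≤ polyNorm ⇑P :=
  le_trans (norm_nonneg (P 0)) (le_csSup (bddAbove_image P) ⟨0, by simp, rfl⟩)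

noncomputable instance : NormedAddCommGroup (HPoly 𝕜 m E F) :=
  AddGroupNorm.toNormedAddCommGroup
    { toFun := fun P => polyNorm (⇑P)
      map_zero' := by
        simp only [polyNorm]
        have h : (fun x : E => ‖(0 : HPoly 𝕜 m E F) x‖) '' {x : E | ‖x‖ ≤ 1} = {0} := by
          apply Set.eq_singleton_iff_nonempty_unique_mem.2
          constructor
          · exact ⟨0, ⟨0, by simp, by simp⟩⟩
          · rintro r ⟨x, -, rfl⟩; simp
        rw [h, csSup_singleton]
      add_le' := fun P Q => by
        apply Real.sSup_le
        · rintro r ⟨x, hx, rfl⟩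
          calc ‖(P + Q) x‖ ≤ ‖P x‖ + ‖Q x‖ := norm_add_le _ _
            _ ≤ polyNorm ⇑P + polyNorm ⇑Q :=
                add_le_add (le_csSup (bddAbove_image P) ⟨x, hx, rfl⟩)
                  (le_csSup (bddAbove_image Q) ⟨x, hx, rfl⟩)
        · exact add_nonneg (polyNorm_coe_nonneg P) (polyNorm_coe_nonneg Q)
      neg' := fun P => by simp [polyNorm]
      eq_zero_of_map_eq_zero' := fun P h => by
        have h' : polyNorm ⇑P = 0 := h
        have hball : ∀ x : E, ‖x‖ ≤ 1 → P x = 0 := by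
          intro x hx
          have h1 : ‖P x‖ ≤ polyNorm ⇑P := le_csSup (bddAbove_image P) ⟨x, hx, rfl⟩
          rw [h'] at h1
          exact norm_le_zero_iff.1 h1
        ext x
        rcases eq_or_ne x 0 with rfl | hx
        · simpa using hball 0 (by simp)
        · obtain ⟨A, hA⟩ := P.isPoly'
          set c : 𝕜 := ((‖x‖ : ℝ) : 𝕜) with hcdef
          have hc : c ≠ 0 := by
            simp only [hcdef, ne_eq, RCLike.ofReal_eq_zero]
            exact norm_ne_zero_iff.2 hx
          have hu : ‖(c⁻¹ • x : E)‖ ≤ 1 := by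
            rw [norm_smul, norm_inv, hcdef, RCLike.norm_ofReal,
              abs_of_nonneg (norm_nonneg x),
              inv_mul_cancel₀ (norm_ne_zero_iff.2 hx)]
          have h0 : P (c⁻¹ • x) = 0 := hball _ hu
          have key : P x = c ^ m • P (c⁻¹ • x) := by
            show P.toFun x = c ^ m • P.toFun (c⁻¹ • x)
            rw [hA x, hA (c⁻¹ • x)]
            have h2 := A.map_smul_univ (fun _ : Fin m => c) (fun _ : Fin m => c⁻¹ • x)
            rw [Finset.prod_const] at h2
            have h3 : (fun _ : Fin m => c • c⁻¹ • x) = fun _ : Fin m => x := by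
              funext i
              rw [smul_smul, mul_inv_cancel₀ hc, one_smul]
            rw [h3] at h2
            simpa using h2
          rw [key, h0, smul_zero]
          simp }

theorem norm_def (P : HPoly 𝕜 m E F) : ‖P‖ = polyNorm ⇑P := rfl

noncomputable instance : NormedSpace 𝕜 (HPoly 𝕜 m E F) :=
  { (inferInstance : Module 𝕜 (HPoly 𝕜 m E F)) with
    norm_smul_le := fun c P => by
      show polyNorm ⇑(c • P) ≤ ‖c‖ * polyNorm ⇑P
      apply Real.sSup_le
      · rintro r ⟨x, hx, rfl⟩
        show ‖(c • P) x‖ ≤ _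
        rw [smul_apply, norm_smul]
        exact mul_le_mul_of_nonneg_left
          (le_csSup (bddAbove_image P) ⟨x, hx, rfl⟩) (norm_nonneg c)
      · exact mul_nonneg (norm_nonneg c) (polyNorm_coe_nonneg P) }

end HPoly

/-!
`Δₖⁿ P` is the diagonal of the `kn`-linear map sending `(P_{j,i})` to
`q ↦ (x ↦ ∏ⱼ q̌(P_{j,1} x, …, P_{j,k} x))`, where `q̌` is the polar of `q`. The polarization
formula `q̌(y) = (2ᵏ k!)⁻¹ ∑_{ε ∈ {±1}ᵏ} ε₁⋯εₖ q(∑ εᵢ yᵢ)` shows that `q ↦ q̌` is linear with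
`‖q̌‖ ≤ kᵏ/k! ‖q‖`, which makes every layer of that construction multilinear and bounded.
For the norm, `|q(P x)|ⁿ ≤ ‖q‖ⁿ ‖P‖ᵏⁿ ‖x‖ᵐⁿᵏ` gives `‖Δₖⁿ‖ ≤ 1`, and the value `1` is attained
at `P = φᵐ • y₀`, `q = ψᵏ` for norm-one functionals `φ`, `ψ` equal to `1` at unit vectors
`x₀`, `y₀`.
-/

open Finset
open scoped Nat

theorem polyNorm_le {X Y : Type*} [Norm X] [Norm Y] {f : X → Y} {C : ℝ} (hC : 0 ≤ C)
    (h : ∀ x, ‖x‖ ≤ 1 → ‖f x‖ ≤ C) : polyNorm f ≤ C :=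
  Real.sSup_le (by rintro _ ⟨x, hx, rfl⟩; exact h x hx) hC

theorem polyNorm_eq_of_forall_le_of_eq {X Y : Type*} [Norm X] [Norm Y] {f : X → Y} {C : ℝ}
    (h : ∀ x, ‖x‖ ≤ 1 → ‖f x‖ ≤ C) {x₀ : X} (hx₀ : ‖x₀‖ ≤ 1) (h₀ : ‖f x₀‖ = C) :
    polyNorm f = C :=
  IsGreatest.csSup_eq ⟨⟨x₀, hx₀, h₀⟩, by rintro _ ⟨x, hx, rfl⟩; exact h x hx⟩

namespace ContinuousMultilinearMap

variable {𝕜 ι : Type*} [NontriviallyNormedField 𝕜] {β : ι → Type*} {N : (i : ι) → β i → Type*}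
  {M : ι → Type*} {G : Type*}
  [∀ i b, NormedAddCommGroup (N i b)] [∀ i b, NormedSpace 𝕜 (N i b)]
  [∀ i, NormedAddCommGroup (M i)] [∀ i, NormedSpace 𝕜 (M i)]
  [NormedAddCommGroup G] [NormedSpace 𝕜 G]

def compContinuousMultilinearMap (g : ContinuousMultilinearMap 𝕜 M G)
    (f : ∀ i, ContinuousMultilinearMap 𝕜 (N i) (M i)) :
    ContinuousMultilinearMap 𝕜 (fun j : Σ i, β i => N j.1 j.2) G where
  toMultilinearMap := g.toMultilinearMap.compMultilinearMap fun i => (f i).toMultilinearMap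
  cont := g.cont.comp <| continuous_pi fun i => (f i).cont.comp <|
    continuous_pi fun b => continuous_apply (⟨i, b⟩ : Σ i, β i)

@[simp] theorem compContinuousMultilinearMap_apply (g : ContinuousMultilinearMap 𝕜 M G)
    (f : ∀ i, ContinuousMultilinearMap 𝕜 (N i) (M i)) (v : ∀ j : Σ i, β i, N j.1 j.2) :
    g.compContinuousMultilinearMap f v = g fun i => f i fun b => v ⟨i, b⟩ := rfl

end ContinuousMultilinearMap

section RCLike

variable {𝕜 : Type*} [RCLike 𝕜] {E F G : Type*}
  [NormedAddCommGroup E] [NormedSpace 𝕜 E] [NormedAddCommGroup F] [NormedSpace 𝕜 F]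
  [NormedAddCommGroup G] [NormedSpace 𝕜 G]

theorem exists_norm_le_one_smul_eq (x : E) :
    ∃ (c : 𝕜) (u : E), ‖c‖ = ‖x‖ ∧ ‖u‖ ≤ 1 ∧ c • u = x := by
  rcases eq_or_ne x 0 with rfl | hx
  · exact ⟨0, 0, by simp⟩
  · refine ⟨‖x‖, (‖x‖ : 𝕜)⁻¹ • x, by simp, (norm_smul_inv_norm hx).le, ?_⟩
    rw [smul_inv_smul₀ (by simpa using hx)]

theorem ContinuousMultilinearMap.opNorm_le_of_norm_le_one {ι : Type*} [Fintype ι]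
    (f : ContinuousMultilinearMap 𝕜 (fun _ : ι => F) G) {C : ℝ} (hC : 0 ≤ C)
    (h : ∀ u : ι → F, (∀ i, ‖u i‖ ≤ 1) → ‖f u‖ ≤ C) : ‖f‖ ≤ C := by
  refine f.opNorm_le_bound hC fun v => ?_
  choose c u hc hu hcu using fun i => exists_norm_le_one_smul_eq (𝕜 := 𝕜) (v i)
  calc ‖f v‖ = ‖f fun i => c i • u i‖ := by simp only [hcu]
    _ = (∏ i, ‖v i‖) * ‖f u‖ := by simp only [f.map_smul_univ, norm_smul, norm_prod, hc]
    _ ≤ (∏ i, ‖v i‖) * C := by gcongr; exact h u hu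
    _ = C * ∏ i, ‖v i‖ := mul_comm _ _

section Polarization

variable {k : ℕ}

variable (𝕜) in
def signs (k : ℕ) : Finset (Fin k → 𝕜) := Fintype.piFinset fun _ => {1, -1}

theorem card_signs : #(signs 𝕜 k) = 2 ^ k := by
  simp [signs, Fintype.card_piFinset, card_pair (by norm_num : (1 : 𝕜) ≠ -1)]

theorem norm_eq_one_of_mem_signs {ε : Fin k → 𝕜} (hε : ε ∈ signs 𝕜 k) (i : Fin k) :
    ‖ε i‖ = 1 := by
  have := Fintype.mem_piFinset.1 hε i
  simp only [mem_insert, mem_singleton] at this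
  rcases this with h | h <;> simp [h]

theorem sum_signs_prod_mul_prod_comp (f : Fin k → Fin k) :
    ∑ ε ∈ signs 𝕜 k, (∏ i, ε i) * ∏ j, ε (f j) = if f.Bijective then 2 ^ k else 0 := by
  classical
  have fiberwise : ∀ ε : Fin k → 𝕜,
      (∏ i, ε i) * ∏ j, ε (f j) = ∏ i, ε i ^ (Fintype.card {j // f j = i} + 1) := by
    intro ε
    rw [← Fintype.prod_fiberwise' f ε, ← prod_mul_distrib]
    refine prod_congr rfl fun i _ => ?_
    rw [prod_const, card_univ, pow_succ']
  have sum_pair_pow : ∀ c : ℕ, ∑ t ∈ ({1, -1} : Finset 𝕜), t ^ (c + 1) = 1 + (-1) ^ (c + 1) :=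
    fun c => by rw [sum_pair (by norm_num), one_pow]
  simp only [fiberwise, signs]
  rw [sum_prod_piFinset _ fun i t => t ^ (Fintype.card {j // f j = i} + 1)]
  simp only [sum_pair_pow]
  split_ifs with hf
  · have hcard : ∀ i, Fintype.card {j // f j = i} = 1 := fun i => by
      obtain ⟨j, hj, huniq⟩ := hf.existsUnique i
      exact Fintype.card_eq_one_iff.2 ⟨⟨j, hj⟩, fun j' => Subtype.ext (huniq j' j'.2)⟩
    simp only [hcard]
    norm_num
  · obtain ⟨i, hi⟩ : ∃ i, ∀ j, f j ≠ i := by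
      simpa [Function.Surjective] using mt Finite.surjective_iff_bijective.1 hf
    refine prod_eq_zero (mem_univ i) ?_
    rw [Fintype.card_eq_zero_iff.2 ⟨fun j => hi j.1 j.2⟩]
    norm_num

theorem ContinuousMultilinearMap.sum_signs_smul_apply_diag
    (B : ContinuousMultilinearMap 𝕜 (fun _ : Fin k => F) G) (v : Fin k → F) :
    ∑ ε ∈ signs 𝕜 k, (∏ i, ε i) • B (fun _ => ∑ i, ε i • v i)
      = (2 ^ k : 𝕜) • ∑ σ : Equiv.Perm (Fin k), B fun i => v (σ i) := by
  classical
  have expand : ∀ ε : Fin k → 𝕜,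
      B (fun _ => ∑ i, ε i • v i) = ∑ f : Fin k → Fin k, (∏ j, ε (f j)) • B fun j => v (f j) := by
    intro ε
    rw [B.map_sum]
    exact sum_congr rfl fun f _ => B.map_smul_univ _ _
  calc ∑ ε ∈ signs 𝕜 k, (∏ i, ε i) • B (fun _ => ∑ i, ε i • v i)
      = ∑ f : Fin k → Fin k,
          (∑ ε ∈ signs 𝕜 k, (∏ i, ε i) * ∏ j, ε (f j)) • B fun j => v (f j) := by
        simp only [expand, smul_sum, smul_smul, sum_smul]
        exact sum_comm
    _ = (2 ^ k : 𝕜) • ∑ f : Fin k → Fin k with f.Bijective, B fun j => v (f j) := by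
        simp only [sum_signs_prod_mul_prod_comp, ite_smul, zero_smul, sum_filter, smul_sum,
          smul_ite, smul_zero]
    _ = (2 ^ k : 𝕜) • ∑ σ : Equiv.Perm (Fin k), B fun i => v (σ i) := by
        rw [sum_subtype _ fun f => mem_filter_univ f]
        exact congrArg _ (Fintype.sum_equiv Equiv.bijectiveEquiv _ _ fun _ => rfl)

end Polarization

theorem IsHomPoly.comp_multilinear {ι : Type*} [Fintype ι] {d N : ℕ}
    (hN : Fintype.card ι * d = N) (B : ContinuousMultilinearMap 𝕜 (fun _ : ι => F) G)
    {P : ι → E → F} (hP : ∀ i, IsHomPoly 𝕜 d (P i)) :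
    IsHomPoly 𝕜 N fun x => B fun i => P i x := by
  choose A hA using hP
  refine ⟨(B.compContinuousMultilinearMap A).domDomCongr
    (Fintype.equivFinOfCardEq (by simpa using hN)), fun x => ?_⟩
  simp [hA]

namespace HPoly

variable {d m n k : ℕ}

theorem norm_apply_le_norm (P : HPoly 𝕜 d E F) {x : E} (hx : ‖x‖ ≤ 1) : ‖P x‖ ≤ ‖P‖ :=
  le_csSup (bddAbove_image P) ⟨x, hx, rfl⟩

theorem norm_le (P : HPoly 𝕜 d E F) {C : ℝ} (hC : 0 ≤ C) (h : ∀ x, ‖x‖ ≤ 1 → ‖P x‖ ≤ C) :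
    ‖P‖ ≤ C :=
  polyNorm_le hC h

theorem map_smul_pow (P : HPoly 𝕜 d E F) (c : 𝕜) (x : E) : P (c • x) = c ^ d • P x := by
  obtain ⟨A, hA⟩ := P.isPoly
  simpa [hA] using A.map_smul_univ (fun _ => c) (fun _ => x)

theorem norm_apply_le (P : HPoly 𝕜 d E F) (x : E) : ‖P x‖ ≤ ‖P‖ * ‖x‖ ^ d := by
  obtain ⟨c, u, hc, hu, rfl⟩ := exists_norm_le_one_smul_eq (𝕜 := 𝕜) x
  calc ‖P (c • u)‖ = ‖c‖ ^ d * ‖P u‖ := by rw [map_smul_pow, norm_smul, norm_pow]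
    _ ≤ ‖c • u‖ ^ d * ‖P‖ := by rw [hc]; gcongr; exact P.norm_apply_le_norm hu
    _ = ‖P‖ * ‖c • u‖ ^ d := mul_comm _ _

/-- The polar `q̌` of `q`: the symmetric `k`-linear map `(1/k!) dᵏq(0)`. -/
noncomputable def polar (q : HPoly 𝕜 k F G) : ContinuousMultilinearMap 𝕜 (fun _ : Fin k => F) G :=
  (k ! : 𝕜)⁻¹ • iteratedFDeriv 𝕜 k q 0

theorem polar_apply_eq_sum_perm (q : HPoly 𝕜 k F G)
    {B : ContinuousMultilinearMap 𝕜 (fun _ : Fin k => F) G} (hB : ∀ y, q y = B fun _ => y)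
    (v : Fin k → F) : q.polar v = (k ! : 𝕜)⁻¹ • ∑ σ : Equiv.Perm (Fin k), B fun i => v (σ i) := by
  rw [polar, _root_.smul_apply, show ⇑q = fun y => B fun _ => y from funext hB,
    B.iteratedFDeriv_comp_diagonal]

theorem polar_apply_diag (q : HPoly 𝕜 k F G) (y : F) : q.polar (fun _ => y) = q y := by
  obtain ⟨B, hB⟩ := q.isPoly
  simp [q.polar_apply_eq_sum_perm hB, hB, Fintype.card_perm, ← Nat.cast_smul_eq_nsmul 𝕜, smul_smul,
    k.factorial_ne_zero]

theorem polar_apply_eq_sum_signs (q : HPoly 𝕜 k F G) (v : Fin k → F) :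
    q.polar v = ((2 ^ k * k ! : 𝕜))⁻¹ • ∑ ε ∈ signs 𝕜 k, (∏ i, ε i) • q (∑ i, ε i • v i) := by
  obtain ⟨B, hB⟩ := q.isPoly
  simp only [q.polar_apply_eq_sum_perm hB, hB, B.sum_signs_smul_apply_diag, smul_smul]
  congr 1
  field_simp

noncomputable def polarₗ :
    HPoly 𝕜 k F G →ₗ[𝕜] ContinuousMultilinearMap 𝕜 (fun _ : Fin k => F) G where
  toFun := polar
  map_add' q q' := by ext v; simp [polar_apply_eq_sum_signs, smul_add, sum_add_distrib]
  map_smul' c q := by ext v; simp [polar_apply_eq_sum_signs, smul_sum, smul_comm c]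

theorem norm_polar_le (q : HPoly 𝕜 k F G) : ‖q.polar‖ ≤ k ^ k / k ! * ‖q‖ := by
  refine q.polar.opNorm_le_of_norm_le_one (by positivity) fun u hu => ?_
  have term_le : ∀ ε ∈ signs 𝕜 k, ‖(∏ i, ε i) • q (∑ i, ε i • u i)‖ ≤ ‖q‖ * k ^ k := by
    intro ε hε
    have hsum : ‖∑ i, ε i • u i‖ ≤ k := by
      calc ‖∑ i, ε i • u i‖ ≤ ∑ i : Fin k, 1 := by
            refine norm_sum_le_of_le _ fun i _ => ?_
            rw [norm_smul, norm_eq_one_of_mem_signs hε, one_mul]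
            exact hu i
        _ = k := by simp
    rw [norm_smul, norm_prod, prod_eq_one fun i _ => norm_eq_one_of_mem_signs hε i, one_mul]
    exact (q.norm_apply_le _).trans (by gcongr)
  calc ‖q.polar u‖ ≤ ((2 ^ k * k ! : ℝ))⁻¹ * (#(signs 𝕜 k) * (‖q‖ * k ^ k)) := by
        rw [polar_apply_eq_sum_signs, norm_smul]
        gcongr
        · simp
        · exact ((norm_sum_le _ _).trans (sum_le_card_nsmul _ _ _ term_le)).trans_eq
            (nsmul_eq_mul _ _)
    _ = k ^ k / k ! * ‖q‖ := by
        rw [card_signs]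
        field_simp
        push_cast
        ring

def evalₗ (x : E) : HPoly 𝕜 m E F →ₗ[𝕜] F where
  toFun P := P x
  map_add' _ _ := rfl
  map_smul' _ _ := rfl

def mkMultilinear {ι M : Type*} [AddCommGroup M] [Module 𝕜 M]
    (f : (ι → M) → HPoly 𝕜 d E G) (Φ : E → MultilinearMap 𝕜 (fun _ : ι => M) G)
    (hΦ : ∀ x v, f v x = Φ x v) : MultilinearMap 𝕜 (fun _ : ι => M) (HPoly 𝕜 d E G) where
  toFun := f
  map_update_add' v i a b := by
    ext x; simp only [add_apply, hΦ]; exact (Φ x).map_update_add v i a b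
  map_update_smul' v i c a := by
    ext x; simp only [smul_apply, hΦ]; exact (Φ x).map_update_smul v i c a

noncomputable def polarProd (qs : Fin n → HPoly 𝕜 k F 𝕜) :
    ContinuousMultilinearMap 𝕜 (fun _ : Fin n × Fin k => F) 𝕜 :=
  ((ContinuousMultilinearMap.mkPiAlgebra 𝕜 (Fin n) 𝕜).compContinuousMultilinearMap
    fun j => (qs j).polar).domDomCongr (Equiv.sigmaEquivProd _ _)

theorem polarProd_apply (qs : Fin n → HPoly 𝕜 k F 𝕜) (w : Fin n × Fin k → F) :
    polarProd qs w = ∏ j, (qs j).polar fun i => w (j, i) := rfl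

theorem norm_polarProd_apply_le (qs : Fin n → HPoly 𝕜 k F 𝕜) (w : Fin n × Fin k → F) :
    ‖polarProd qs w‖ ≤ (∏ j, ‖(qs j).polar‖) * ∏ p, ‖w p‖ := by
  rw [polarProd_apply, norm_prod, Fintype.prod_prod_type, ← prod_mul_distrib]
  exact prod_le_prod (fun _ _ => norm_nonneg _) fun j _ => (qs j).polar.le_opNorm _

/-- `x ↦ ∏ⱼ q̌ⱼ(P_{j,1}(x), …, P_{j,k}(x))`. -/
noncomputable def adjointTerm (Ps : Fin n × Fin k → HPoly 𝕜 m E F) (qs : Fin n → HPoly 𝕜 k F 𝕜) :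
    HPoly 𝕜 (m * n * k) E 𝕜 :=
  ⟨fun x => polarProd qs fun p => Ps p x,
    IsHomPoly.comp_multilinear (by simp; ring) _ fun p => (Ps p).isPoly⟩

theorem norm_adjointTerm_le (Ps : Fin n × Fin k → HPoly 𝕜 m E F) (qs : Fin n → HPoly 𝕜 k F 𝕜) :
    ‖adjointTerm Ps qs‖ ≤ (k ^ k / k !) ^ n * (∏ p, ‖Ps p‖) * ∏ j, ‖qs j‖ := by
  refine norm_le _ (by positivity) fun x hx => ?_
  calc ‖polarProd qs fun p => Ps p x‖ ≤ (∏ j, ‖(qs j).polar‖) * ∏ p, ‖Ps p x‖ :=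
        norm_polarProd_apply_le _ _
    _ ≤ (∏ j, (k ^ k / k ! * ‖qs j‖)) * ∏ p, ‖Ps p‖ := by
        gcongr with j _ p _
        · exact (qs j).norm_polar_le
        · exact (Ps p).norm_apply_le_norm hx
    _ = _ := by rw [prod_mul_distrib, prod_const, card_univ, Fintype.card_fin]; ring

noncomputable def adjointTermMultilinear (Ps : Fin n × Fin k → HPoly 𝕜 m E F) :
    ContinuousMultilinearMap 𝕜 (fun _ : Fin n => HPoly 𝕜 k F 𝕜) (HPoly 𝕜 (m * n * k) E 𝕜) :=
  (mkMultilinear (adjointTerm Ps)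
    (fun x => (MultilinearMap.mkPiAlgebra 𝕜 (Fin n) 𝕜).compLinearMap fun j =>
      (ContinuousMultilinearMap.apply 𝕜 _ 𝕜 fun i => Ps (j, i) x).toLinearMap ∘ₗ polarₗ)
    fun _ _ => rfl).mkContinuous ((k ^ k / k ! : ℝ) ^ n * ∏ p, ‖Ps p‖) (norm_adjointTerm_le Ps)

noncomputable def adjointPoly (Ps : Fin n × Fin k → HPoly 𝕜 m E F) :
    HPoly 𝕜 n (HPoly 𝕜 k F 𝕜) (HPoly 𝕜 (m * n * k) E 𝕜) :=
  ⟨fun q => adjointTerm Ps fun _ => q, ⟨adjointTermMultilinear Ps, fun _ => rfl⟩⟩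

theorem norm_adjointPoly_le (Ps : Fin n × Fin k → HPoly 𝕜 m E F) :
    ‖adjointPoly Ps‖ ≤ (k ^ k / k !) ^ n * ∏ p, ‖Ps p‖ := by
  refine norm_le _ (by positivity) fun q hq => (norm_adjointTerm_le Ps _).trans ?_
  calc (k ^ k / k ! : ℝ) ^ n * (∏ p, ‖Ps p‖) * ∏ _j : Fin n, ‖q‖
      ≤ (k ^ k / k ! : ℝ) ^ n * (∏ p, ‖Ps p‖) * 1 := by
        gcongr
        exact prod_le_one (fun _ _ => norm_nonneg _) fun _ _ => hq
    _ = _ := mul_one _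

noncomputable def adjointMultilinear :
    ContinuousMultilinearMap 𝕜 (fun _ : Fin n × Fin k => HPoly 𝕜 m E F)
      (HPoly 𝕜 n (HPoly 𝕜 k F 𝕜) (HPoly 𝕜 (m * n * k) E 𝕜)) :=
  (mkMultilinear adjointPoly
    (fun q => mkMultilinear (fun Ps => adjointTerm Ps fun _ => q)
      (fun x => (polarProd fun _ => q).toMultilinearMap.compLinearMap fun _ => evalₗ x)
      fun _ _ => rfl)
    fun _ _ => rfl).mkContinuous ((k ^ k / k ! : ℝ) ^ n) norm_adjointPoly_le

/-- The generalized adjoint `Δₖⁿ P`. -/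
noncomputable def genAdjoint (n k : ℕ) (P : HPoly 𝕜 m E F) :
    HPoly 𝕜 n (HPoly 𝕜 k F 𝕜) (HPoly 𝕜 (m * n * k) E 𝕜) :=
  adjointPoly fun _ => P

theorem genAdjoint_apply (P : HPoly 𝕜 m E F) (q : HPoly 𝕜 k F 𝕜) (x : E) :
    genAdjoint n k P q x = q (P x) ^ n := by
  change polarProd (fun _ => q) (fun _ => P x) = _
  simp [polarProd_apply, polar_apply_diag]

theorem isHomPoly_genAdjoint : IsHomPoly 𝕜 (k * n) (genAdjoint n k : HPoly 𝕜 m E F → _) :=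
  ⟨adjointMultilinear.domDomCongr ((Equiv.prodComm _ _).trans finProdFinEquiv), fun _ => rfl⟩

theorem norm_genAdjoint_le (P : HPoly 𝕜 m E F) : ‖genAdjoint n k P‖ ≤ ‖P‖ ^ (k * n) := by
  refine norm_le _ (by positivity) fun q hq => norm_le _ (by positivity) fun x hx => ?_
  have hPx : ‖P x‖ ≤ ‖P‖ := P.norm_apply_le_norm hx
  have hqPx : ‖q (P x)‖ ≤ ‖P‖ ^ k :=
    calc ‖q (P x)‖ ≤ ‖q‖ * ‖P x‖ ^ k := q.norm_apply_le _
      _ ≤ 1 * ‖P‖ ^ k := by gcongr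
      _ = ‖P‖ ^ k := one_mul _
  rw [genAdjoint_apply, norm_pow, pow_mul]
  gcongr

theorem exists_apply_eq_norm_le [Nontrivial E] (d : ℕ) (y : F) :
    ∃ (P : HPoly 𝕜 d E F) (x : E), ‖x‖ = 1 ∧ P x = y ∧ ‖P‖ ≤ ‖y‖ := by
  obtain ⟨x, hx⟩ : ∃ x : E, ‖x‖ = 1 := by
    obtain ⟨x, hx⟩ := exists_ne (0 : E)
    exact ⟨_, norm_smul_inv_norm (𝕜 := 𝕜) hx⟩
  obtain ⟨f, hf, hfx⟩ := exists_dual_vector' 𝕜 x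
  let P : HPoly 𝕜 d E F := ⟨fun z => f z ^ d • y,
    (ContinuousMultilinearMap.mkPiRing 𝕜 (Fin d) y).compContinuousLinearMap (fun _ => f),
    fun z => by simp⟩
  refine ⟨P, x, hx, show f x ^ d • y = y by simp [hfx, hx],
    norm_le _ (norm_nonneg _) fun z hz => ?_⟩
  have hfz : ‖f z‖ ≤ 1 := (f.le_opNorm z).trans (by rw [hf, one_mul]; exact hz)
  calc ‖f z ^ d • y‖ = ‖f z‖ ^ d * ‖y‖ := by rw [norm_smul, norm_pow]
    _ ≤ 1 * ‖y‖ := by gcongr; exact pow_le_one₀ (norm_nonneg _) hfz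
    _ = ‖y‖ := one_mul _

theorem polyNorm_genAdjoint [Nontrivial E] [Nontrivial F] :
    polyNorm (genAdjoint n k : HPoly 𝕜 m E F → _) = 1 := by
  obtain ⟨q, y, hy, hqy, hq⟩ := exists_apply_eq_norm_le (𝕜 := 𝕜) (E := F) k (1 : 𝕜)
  obtain ⟨P, x, hx, hPx, hP⟩ := exists_apply_eq_norm_le (𝕜 := 𝕜) (E := E) m y
  have hP1 : ‖P‖ ≤ 1 := hP.trans_eq hy
  have hle : ∀ P : HPoly 𝕜 m E F, ‖P‖ ≤ 1 → ‖genAdjoint n k P‖ ≤ 1 := fun P hP =>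
    (norm_genAdjoint_le P).trans (pow_le_one₀ (norm_nonneg _) hP)
  refine polyNorm_eq_of_forall_le_of_eq hle hP1 (le_antisymm (hle P hP1) ?_)
  calc (1 : ℝ) = ‖genAdjoint n k P q x‖ := by simp [genAdjoint_apply, hPx, hqy]
    _ ≤ ‖genAdjoint n k P q‖ := (genAdjoint n k P q).norm_apply_le_norm hx.le
    _ ≤ ‖genAdjoint n k P‖ := (genAdjoint n k P).norm_apply_le_norm (hq.trans_eq norm_one)

end HPoly

end RCLike

theorem statement2_general (𝕜 : Type*) [RCLike 𝕜] (E F : Type*)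
    [NormedAddCommGroup E] [NormedSpace 𝕜 E]
    [NormedAddCommGroup F] [NormedSpace 𝕜 F]
    (m n k : ℕ) :
    ∃ D : HPoly 𝕜 m E F → HPoly 𝕜 n (HPoly 𝕜 k F 𝕜) (HPoly 𝕜 (m * n * k) E 𝕜),
      (∀ (P : HPoly 𝕜 m E F) (q : HPoly 𝕜 k F 𝕜) (x : E), D P q x = q (P x) ^ n) ∧
      IsHomPoly 𝕜 (k * n) D ∧
      (Nontrivial E → Nontrivial F → polyNorm D = 1) :=
  ⟨HPoly.genAdjoint n k, HPoly.genAdjoint_apply, HPoly.isHomPoly_genAdjoint,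
    fun _ _ => HPoly.polyNorm_genAdjoint⟩

/-- The correspondence `Δₖⁿ : 𝒫(^mE;F) → 𝒫(ⁿ𝒫(^kF);𝒫(^{mnk}E))`,
`P ↦ Δₖⁿ P`, is a continuous `kn`-homogeneous polynomial, and if `E ≠ {0}` and `F ≠ {0}`
then `‖Δₖⁿ‖ = 1`. -/
theorem statement2 (𝕜 : Type*) [RCLike 𝕜] (E F : Type*)
    [NormedAddCommGroup E] [NormedSpace 𝕜 E] [CompleteSpace E]
    [NormedAddCommGroup F] [NormedSpace 𝕜 F] [CompleteSpace F]
    (m n k : ℕ) (hm : 1 ≤ m) (hn : 1 ≤ n) (hk : 1 ≤ k) :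
    ∃ D : HPoly 𝕜 m E F → HPoly 𝕜 n (HPoly 𝕜 k F 𝕜) (HPoly 𝕜 (m * n * k) E 𝕜),
      (∀ (P : HPoly 𝕜 m E F) (q : HPoly 𝕜 k F 𝕜) (x : E), D P q x = q (P x) ^ n) ∧
      IsHomPoly 𝕜 (k * n) D ∧
      (Nontrivial E → Nontrivial F → polyNorm D = 1) :=
  statement2_general 𝕜 E F m n k
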